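/- Let R be an odd integer with |R| ≥ 3, b ∈ ℝ \ {0}, and let μ be the unique probability measure with μ = (1/2)(μ∘σ₀^{-1} + μ∘σ_b^{-1}) where σ₀(x) = x/R, σ_b(x) = x/R + b. Then any set Γ ⊂ ℝ such that {e_γ : γ ∈ Γ} is orthogonal in L²(μ) has at most two elements. -/

import Mathlib

/-! With `φ = charFun μ`, self-similarity gives `φ s = (1 + e^{isb})/2 · φ (s/R)`, while
`φ (s/Rⁿ) → φ 0 = 1`. So a zero `s` of `φ` must, at some step `s/Rⁿ`, be a zero of the first factor:
`s b = (2k+1) π Rⁿ`. For odd `R` this makes `2(γ₂ - γ₁) b` an odd integer whenever `e_{γ₁}` and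
`e_{γ₂}` are orthogonal, and three mutually orthogonal exponentials would give odd integers with
`m₁ + m₂ = m₃`, which parity forbids. -/

open MeasureTheory Complex Filter Topology Real

section SelfSimilar

variable {X : Type*} [TopologicalSpace X] [MeasurableSpace X] [OpensMeasurableSpace X]
  {μ : Measure X} [IsFiniteMeasure μ]

lemma integral_complex_eq_half_add_of_forall_real {σ τ : X → X}
    (hσ : Continuous σ) (hτ : Continuous τ)
    (hμ : ∀ f : X → ℝ, Continuous f →
      ∫ x, f x ∂μ = (1 / 2) * ((∫ x, f (σ x) ∂μ) + ∫ x, f (τ x) ∂μ))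
    {g : X → ℂ} (hg : Continuous g) {C : ℝ} (hC : ∀ x, ‖g x‖ ≤ C) :
    ∫ x, g x ∂μ = (1 / 2) * ((∫ x, g (σ x) ∂μ) + ∫ x, g (τ x) ∂μ) := by
  have hint : ∀ {h : X → X}, Continuous h → Integrable (fun x => g (h x)) μ := fun hh =>
    .of_bound (hg.comp hh).aestronglyMeasurable C (ae_of_all _ fun _ => hC _)
  have hre : ∀ {h : X → X}, Continuous h → (∫ x, g (h x) ∂μ).re = ∫ x, (g (h x)).re ∂μ :=
    fun hh => (integral_re (hint hh)).symm
  have him : ∀ {h : X → X}, Continuous h → (∫ x, g (h x) ∂μ).im = ∫ x, (g (h x)).im ∂μ :=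
    fun hh => (integral_im (hint hh)).symm
  apply Complex.ext
  · rw [show (∫ x, g x ∂μ).re = ∫ x, (g x).re ∂μ from hre continuous_id,
      hμ (fun x => (g x).re) (by fun_prop)]
    simp [hre hσ, hre hτ]
  · rw [show (∫ x, g x ∂μ).im = ∫ x, (g x).im ∂μ from him continuous_id,
      hμ (fun x => (g x).im) (by fun_prop)]
    simp [him hσ, him hτ]

end SelfSimilar

section CharFun

variable {μ : Measure ℝ} {R b : ℝ}
  (hμ : ∀ f : ℝ → ℝ, Continuous f →
    ∫ x, f x ∂μ = (1 / 2) * ((∫ x, f (x / R) ∂μ) + ∫ x, f (x / R + b) ∂μ))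
include hμ

lemma charFun_eq_mul_charFun_div [IsFiniteMeasure μ] (s : ℝ) :
    charFun μ s = (1 + cexp (s * b * I)) / 2 * charFun μ (s / R) := by
  have h₁ : ∫ x, cexp (s * ↑(x / R) * I) ∂μ = charFun μ (s / R) := by
    rw [charFun_apply_real]
    congr with x
    push_cast
    ring_nf
  have h₂ : ∫ x, cexp (s * ↑(x / R + b) * I) ∂μ = cexp (s * b * I) * charFun μ (s / R) := by
    rw [charFun_apply_real, ← integral_const_mul]
    congr with x
    rw [← Complex.exp_add]
    push_cast
    ring_nf
  rw [charFun_apply_real, integral_complex_eq_half_add_of_forall_real (by fun_prop) (by fun_prop)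
    hμ (g := fun x : ℝ => cexp (s * x * I)) (by fun_prop) (C := 1)
    fun x => by rw [← ofReal_mul, norm_exp_ofReal_mul_I], h₁, h₂]
  ring

lemma exists_mul_eq_odd_mul_pi_mul_pow_of_charFun_div_pow_ne_zero [IsFiniteMeasure μ]
    (hR : R ≠ 0) (N : ℕ) {s : ℝ} (hs : charFun μ s = 0) (hN : charFun μ (s / R ^ N) ≠ 0) :
    ∃ (n : ℕ) (k : ℤ), s * b = (2 * k + 1) * π * R ^ n := by
  induction N generalizing s with
  | zero => simp_all
  | succ N ih =>
    rw [charFun_eq_mul_charFun_div hμ] at hs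
    rcases mul_eq_zero.mp hs with h | h
    · have hexp : cexp (↑(s * b) * I) = -1 := by
        push_cast
        linear_combination 2 * h
      have hcos : Real.cos (s * b) = -1 := by rw [← exp_ofReal_mul_I_re, hexp, neg_re, one_re]
      obtain ⟨k, hk⟩ := Real.cos_eq_neg_one_iff.mp hcos
      exact ⟨0, k, by linear_combination -hk⟩
    · obtain ⟨n, k, hnk⟩ := ih h (by rwa [div_div, ← pow_succ'])
      refine ⟨n + 1, k, ?_⟩
      field_simp at hnk
      linear_combination hnk

lemma exists_mul_eq_odd_mul_pi_mul_pow_of_charFun_eq_zero [IsProbabilityMeasure μ]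
    (hR : 1 < |R|) {s : ℝ} (hs : charFun μ s = 0) :
    ∃ (n : ℕ) (k : ℤ), s * b = (2 * k + 1) * π * R ^ n := by
  have hR₀ : R ≠ 0 := by rintro rfl; norm_num at hR
  have hdiv : Tendsto (fun N : ℕ => s / R ^ N) atTop (𝓝 0) := by
    have hinv : |R⁻¹| < 1 := by rw [abs_inv]; exact inv_lt_one_of_one_lt₀ hR
    simpa [div_eq_mul_inv, inv_pow] using
      (tendsto_pow_atTop_nhds_zero_of_abs_lt_one hinv).const_mul s
  have hlim : Tendsto (fun N : ℕ => charFun μ (s / R ^ N)) atTop (𝓝 1) := by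
    simpa [Function.comp_def] using ((continuous_charFun (μ := μ)).tendsto 0).comp hdiv
  obtain ⟨N, hN⟩ := (hlim.eventually_ne one_ne_zero).exists
  exact exists_mul_eq_odd_mul_pi_mul_pow_of_charFun_div_pow_ne_zero hμ hR₀ N hs hN

end CharFun

lemma exists_odd_eq_two_mul_mul_of_charFun_eq_zero {μ : Measure ℝ} [IsProbabilityMeasure μ]
    {R : ℤ} (hodd : Odd R) (hR : 1 < |R|) {b : ℝ}
    (hμ : ∀ f : ℝ → ℝ, Continuous f →
      ∫ x, f x ∂μ = (1 / 2) * ((∫ x, f (x / (R : ℝ)) ∂μ) + ∫ x, f (x / (R : ℝ) + b) ∂μ))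
    {t : ℝ} (ht : charFun μ (2 * π * t) = 0) :
    ∃ m : ℤ, Odd m ∧ 2 * t * b = m := by
  have hR' : 1 < |(R : ℝ)| := by rw [← Int.cast_abs]; exact_mod_cast hR
  obtain ⟨n, k, h⟩ := exists_mul_eq_odd_mul_pi_mul_pow_of_charFun_eq_zero hμ hR' ht
  refine ⟨R ^ n * (2 * k + 1), hodd.pow.mul (odd_two_mul_add_one k), ?_⟩
  apply mul_left_cancel₀ Real.pi_ne_zero
  push_cast
  linear_combination h

theorem odd_scale_at_most_two_orthogonal (R : ℤ) (hodd : Odd R) (hR : 3 ≤ |R|)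
    (b : ℝ)
    (μ : Measure ℝ) [IsProbabilityMeasure μ]
    (hμ : ∀ f : ℝ → ℝ, Continuous f →
      ∫ x, f x ∂μ =
        (1 / 2) * ((∫ x, f (x / (R : ℝ)) ∂μ) + ∫ x, f (x / (R : ℝ) + b) ∂μ))
    (Γ : Set ℝ)
    (horth : ∀ γ₁ ∈ Γ, ∀ γ₂ ∈ Γ, γ₁ ≠ γ₂ →
      ∫ x, Complex.exp ((((2 : ℝ) * Real.pi * ((γ₂ - γ₁) * x) : ℝ) : ℂ) * Complex.I) ∂μ = 0) :
    ∀ x ∈ Γ, ∀ y ∈ Γ, ∀ z ∈ Γ, x = y ∨ x = z ∨ y = z := by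
  have hodd_gap : ∀ γ₁ ∈ Γ, ∀ γ₂ ∈ Γ, γ₁ ≠ γ₂ → ∃ m : ℤ, Odd m ∧ 2 * (γ₂ - γ₁) * b = m := by
    intro γ₁ h₁ γ₂ h₂ hne
    refine exists_odd_eq_two_mul_mul_of_charFun_eq_zero hodd (by lia) hμ ?_
    rw [charFun_apply_real, ← horth γ₁ h₁ γ₂ h₂ hne]
    congr with x
    push_cast
    ring_nf
  intro x hx y hy z hz
  by_contra! hne
  obtain ⟨m₁, hm₁, e₁⟩ := hodd_gap x hx y hy hne.1
  obtain ⟨m₂, hm₂, e₂⟩ := hodd_gap y hy z hz hne.2.2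
  obtain ⟨m₃, hm₃, e₃⟩ := hodd_gap x hx z hz hne.2.1
  have hsum : m₁ + m₂ = m₃ := by
    have : (m₁ + m₂ : ℝ) = m₃ := by rw [← e₁, ← e₂, ← e₃]; ring
    exact_mod_cast this
  exact Int.not_even_iff_odd.mpr hm₃ (hsum ▸ hm₁.add_odd hm₂)
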